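/- Define the foreign government's best-response product-R&D subsidy σ1*(σ2) := [m²/(4(1−b1)(1−b2))] / [1 − 1/(2(1−b2)(1−σ2)θ2)]. On the set of σ2 ∈ (0,1) with 2(1−b2)(1−σ2)θ2 > 1, and for m ≠ 0: (i) σ1*(σ2) > 0; (ii) σ1*(σ2) does not depend on the home tax t; (iii) σ1* is differentiable in σ2 with dσ1*/dσ2 = [1/(1 − 1/(2(1−b2)(1−σ2)θ2))²]·m²/(8(1−b1)(1−b2)²(1−σ2)²θ2) > 0, so σ2 ↦ σ1*(σ2) is strictly increasing (product-R&D subsidies are strategic complements). -/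

import Mathlib

/-- The foreign government's best-response product-R&D subsidy
`σ1*(σ2) = [m²/(4(1−b1)(1−b2))] / [1 − 1/(2(1−b2)(1−σ2)θ2)]` (the argument `t` is
carried along to express that the best response does not depend on the home tax). -/
noncomputable def σ1star (m b1 b2 t θ2 σ2 : ℝ) : ℝ :=
  (m ^ 2 / (4 * (1 - b1) * (1 - b2))) / (1 - 1 / (2 * (1 - b2) * (1 - σ2) * θ2))

/-- For `m ≠ 0`, on the set of `σ2 ∈ (0,1)` with `2(1−b2)(1−σ2)θ2 > 1`:
(i) `σ1*(σ2) > 0`; (ii) `σ1*(σ2)` does not depend on the home tax `t`;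
(iii) `σ1*` is differentiable with
`dσ1*/dσ2 = [1/(1 − 1/(2(1−b2)(1−σ2)θ2))²]·m²/(8(1−b1)(1−b2)²(1−σ2)²θ2) > 0`,
so `σ2 ↦ σ1*(σ2)` is strictly increasing: product-R&D subsidies are strategic
complements. -/
theorem foreign_subsidy_best_response_productRD
    (m b1 b2 t θ2 : ℝ)
    (hb1 : b1 ∈ Set.Ioo (0 : ℝ) 1) (hb2 : b2 ∈ Set.Ioo (0 : ℝ) 1)
    (ht : t ∈ Set.Ioo (0 : ℝ) 1) (hθ2 : 0 < θ2) (hm : m ≠ 0) :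
    (∀ σ2 ∈ Set.Ioo (0 : ℝ) 1, 2 * (1 - b2) * (1 - σ2) * θ2 > 1 →
      0 < σ1star m b1 b2 t θ2 σ2 ∧
      (∀ t' : ℝ, σ1star m b1 b2 t' θ2 σ2 = σ1star m b1 b2 t θ2 σ2) ∧
      HasDerivAt (fun σ => σ1star m b1 b2 t θ2 σ)
        ((1 / (1 - 1 / (2 * (1 - b2) * (1 - σ2) * θ2)) ^ 2) *
          (m ^ 2 / (8 * (1 - b1) * (1 - b2) ^ 2 * (1 - σ2) ^ 2 * θ2))) σ2 ∧
      0 < (1 / (1 - 1 / (2 * (1 - b2) * (1 - σ2) * θ2)) ^ 2) *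
          (m ^ 2 / (8 * (1 - b1) * (1 - b2) ^ 2 * (1 - σ2) ^ 2 * θ2))) ∧
    StrictMonoOn (fun σ => σ1star m b1 b2 t θ2 σ)
      {σ2 : ℝ | σ2 ∈ Set.Ioo (0 : ℝ) 1 ∧ 2 * (1 - b2) * (1 - σ2) * θ2 > 1} := by
  obtain ⟨hb1l, hb1r⟩ := hb1
  obtain ⟨hb2l, hb2r⟩ := hb2
  have hb1' : (0:ℝ) < 1 - b1 := by linarith
  have hb2' : (0:ℝ) < 1 - b2 := by linarith
  have hk : (0:ℝ) < 2 * (1 - b2) * θ2 := by positivity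
  have hki : (2 * (1 - b2) * θ2) * (1 / (2 * (1 - b2) * θ2)) = 1 := by
    field_simp
  -- key derivative lemma
  have key : ∀ σ : ℝ, 1 < 2 * (1 - b2) * (1 - σ) * θ2 →
      HasDerivAt (fun σ => σ1star m b1 b2 t θ2 σ)
        ((1 / (1 - 1 / (2 * (1 - b2) * (1 - σ) * θ2)) ^ 2) *
          (m ^ 2 / (8 * (1 - b1) * (1 - b2) ^ 2 * (1 - σ) ^ 2 * θ2))) σ := by
    intro σ hσ
    have hg : (0:ℝ) < 2 * (1 - b2) * (1 - σ) * θ2 := lt_trans one_pos hσ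
    have hgne : 2 * (1 - b2) * (1 - σ) * θ2 ≠ 0 := ne_of_gt hg
    have hs : 0 < 1 - σ := by nlinarith
    have hden : 0 < 1 - 1 / (2 * (1 - b2) * (1 - σ) * θ2) := by
      have h1 : 1 / (2 * (1 - b2) * (1 - σ) * θ2) < 1 := by
        rw [div_lt_one hg]; exact hσ
      linarith
    have h1 : HasDerivAt (fun σ : ℝ => 2 * (1 - b2) * (1 - σ) * θ2)
        (-(2 * (1 - b2) * θ2)) σ := by
      have := (((hasDerivAt_id σ).const_sub 1).const_mul (2 * (1 - b2))).mul_const θ2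
      refine this.congr_deriv ?_
      ring
    have h2 := h1.inv hgne
    have h3 := h2.const_sub 1
    have hden' : 1 - (2 * (1 - b2) * (1 - σ) * θ2)⁻¹ ≠ 0 := by
      rw [← one_div]; exact ne_of_gt hden
    have h4 := (hasDerivAt_const σ (m ^ 2 / (4 * (1 - b1) * (1 - b2)))).div h3 hden'
    have heq : (fun σ => σ1star m b1 b2 t θ2 σ)
        = fun σ => m ^ 2 / (4 * (1 - b1) * (1 - b2)) /
            (1 - (2 * (1 - b2) * (1 - σ) * θ2)⁻¹) := by
      funext x
      simp [σ1star, one_div]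
    rw [heq]
    refine h4.congr_deriv ?_
    rw [one_div (2 * (1 - b2) * (1 - σ) * θ2)]
    have e1 : m ^ 2 / (8 * (1 - b1) * (1 - b2) ^ 2 * (1 - σ) ^ 2 * θ2)
        = m ^ 2 / (4 * (1 - b1) * (1 - b2)) *
          (2 * (1 - b2) * θ2 / (2 * (1 - b2) * (1 - σ) * θ2) ^ 2) := by
      rw [div_mul_div_comm, div_eq_div_iff (by positivity) (by positivity)]
      ring
    rw [e1]
    simp only [Pi.inv_apply]
    ring
  refine ⟨?_, ?_⟩
  · intro σ hσ hcond
    have hg : (0:ℝ) < 2 * (1 - b2) * (1 - σ) * θ2 := lt_trans one_pos hcond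
    have hs : 0 < 1 - σ := by nlinarith
    have hden : 0 < 1 - 1 / (2 * (1 - b2) * (1 - σ) * θ2) := by
      have h1 : 1 / (2 * (1 - b2) * (1 - σ) * θ2) < 1 := by
        rw [div_lt_one hg]; exact hcond
      linarith
    refine ⟨?_, fun t' => rfl, key σ hcond, ?_⟩
    · exact div_pos (by positivity) hden
    · have h1 : 0 < (1 - 1 / (2 * (1 - b2) * (1 - σ) * θ2)) ^ 2 := by positivity
      have h2 : 0 < m ^ 2 / (8 * (1 - b1) * (1 - b2) ^ 2 * (1 - σ) ^ 2 * θ2) := by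
        positivity
      exact mul_pos (by positivity) h2
  · have hSeq : {σ2 : ℝ | σ2 ∈ Set.Ioo (0 : ℝ) 1 ∧ 2 * (1 - b2) * (1 - σ2) * θ2 > 1}
        = Set.Ioo (0:ℝ) (min 1 (1 - 1 / (2 * (1 - b2) * θ2))) := by
      ext x
      simp only [Set.mem_setOf_eq, Set.mem_Ioo, lt_min_iff]
      constructor
      · rintro ⟨⟨hx0, hx1⟩, hc⟩
        refine ⟨hx0, hx1, ?_⟩
        nlinarith
      · rintro ⟨hx0, hx1, hx2⟩
        refine ⟨⟨hx0, hx1⟩, ?_⟩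
        nlinarith
    rw [hSeq]
    have hmem : ∀ x ∈ Set.Ioo (0:ℝ) (min 1 (1 - 1 / (2 * (1 - b2) * θ2))),
        1 < 2 * (1 - b2) * (1 - x) * θ2 := by
      intro x hx
      have := hx.2
      rw [lt_min_iff] at this
      nlinarith [this.2]
    apply strictMonoOn_of_deriv_pos (convex_Ioo _ _)
    · intro x hx
      exact (key x (hmem x hx)).continuousAt.continuousWithinAt
    · intro x hx
      rw [interior_Ioo] at hx
      rw [(key x (hmem x hx)).deriv]
      have hcond := hmem x hx
      have hg : (0:ℝ) < 2 * (1 - b2) * (1 - x) * θ2 := lt_trans one_pos hcond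
      have hs : 0 < 1 - x := by nlinarith
      have hden : 0 < 1 - 1 / (2 * (1 - b2) * (1 - x) * θ2) := by
        have h1 : 1 / (2 * (1 - b2) * (1 - x) * θ2) < 1 := by
          rw [div_lt_one hg]; exact hcond
        linarith
      have h2 : 0 < m ^ 2 / (8 * (1 - b1) * (1 - b2) ^ 2 * (1 - x) ^ 2 * θ2) := by
        positivity
      exact mul_pos (by positivity) h2
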